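/- lim_{L→∞} E(N̂⁰(L)²)/L = 1, where N̂⁰(L) is the number of renewal epochs in {1,…,L} of the renewal process with i.i.d. inter-arrival times 2X_i⁰ + 1 and X_i⁰ Catalan-distributed at the critical parameter. -/

import Mathlib

open MeasureTheory ProbabilityTheory Filter Real

noncomputable section

/-- The mass function of the Catalan distribution with parameter `ρ = 1/2 - δ`:
`P(X = n) = C_n ρ^n (1-ρ)^(n+1)`. -/
def catMass (ρ : ℝ) (n : ℕ) : ℝ := (catalan n : ℝ) * ρ ^ n * (1 - ρ) ^ (n + 1)

/-- An i.i.d. sequence `(X_i)` with the Catalan distribution of parameter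
`ρ = 1/2 - δ` on a probability space. -/
def IIDCat {Ω : Type} [MeasurableSpace Ω] (μ : MeasureTheory.Measure Ω) (δ : ℝ)
    (X : ℕ → Ω → ℕ) : Prop :=
  IsProbabilityMeasure μ ∧ (∀ i, Measurable (X i)) ∧
  iIndepFun X μ ∧
  ∀ i n, μ {ω | X i ω = n} = ENNReal.ofReal (catMass (1/2 - δ) n)

/-- `N̂(L)`: the number of renewal events in `{1, …, L}` for the renewal process with
a renewal at the origin and inter-arrival times `2 X_i + 1`, i.e. the number of `k ≥ 1`
with `S_k = Σ_{i=1}^k (2 X_i + 1) ≤ L` (indices relabelled from 0). -/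
def renCount {Ω : Type} (X : ℕ → Ω → ℕ) (L : ℕ) (ω : Ω) : ℕ :=
  Set.ncard {k : ℕ | 1 ≤ k ∧ ∑ i ∈ Finset.range k, (2 * X i ω + 1) ≤ L}

set_option linter.unusedSectionVars false
set_option maxHeartbeats 1000000

open Finset


def w : ℕ → ℝ := fun m => if m % 2 = 1 then (catalan ((m-1)/2) : ℝ) / 2 ^ m else 0

lemma w_nonneg (m : ℕ) : 0 ≤ w m := by
  unfold w; split <;> positivity

lemma w_even (m : ℕ) (h : m % 2 = 0) : w m = 0 := by simp [w, h]

lemma w_zero : w 0 = 0 := w_even 0 rfl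

lemma w_odd (n : ℕ) : w (2*n+1) = (catalan n : ℝ) / 2 ^ (2*n+1) := by
  have h : (2*n+1) % 2 = 1 := by omega
  have h2 : (2*n+1-1)/2 = n := by omega
  simp [w, h, h2]

-- convolution identity from the Catalan recurrence
lemma w_conv (m : ℕ) :
    (if m = 0 then (1:ℝ) else 0) + ∑ j ∈ range (m+1), w j * w (m - j) = 2 * w (m+1) := by
  rcases Nat.eq_zero_or_pos m with hm | hm
  · subst hm
    simp [w_odd 0, w]
  rcases Nat.even_or_odd m with ⟨n, hn⟩ | ⟨n, hn⟩
  · -- m = 2n, n ≥ 1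
    subst hn
    have hn1 : 1 ≤ n := by omega
    rw [if_neg (by omega)]
    have hsum : ∑ j ∈ range (n+n+1), w j * w (n+n - j)
        = ∑ i ∈ range n, w (2*i+1) * w (2*(n-1-i)+1) := by
      rw [← Finset.sum_filter_of_ne (p := fun j => j % 2 = 1)]
      · apply Finset.sum_nbij' (fun j => (j-1)/2) (fun i => 2*i+1)
        · intro j hj; simp only [mem_filter, mem_range] at hj ⊢; omega
        · intro i hi; simp only [mem_filter, mem_range] at hi ⊢; omega
        · intro j hj; simp only [mem_filter, mem_range] at hj; omega
        · intro i hi; simp only [mem_range] at hi; omega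
        · intro j hj
          simp only [mem_filter, mem_range] at hj
          congr 2 <;> omega
      · intro j hj hne
        by_contra h
        have : w j = 0 := w_even j (by omega)
        simp [this] at hne
    rw [hsum]
    have hcat : (catalan n : ℝ) = ∑ i ∈ range n, (catalan i : ℝ) * catalan (n-1-i) := by
      have h0 := catalan_succ' (n-1)
      rw [Nat.sum_antidiagonal_eq_sum_range_succ_mk, Nat.succ_eq_add_one,
        show n - 1 + 1 = n from by omega] at h0
      rw [h0]; push_cast; rfl
    have hstep : ∀ i ∈ range n, w (2*i+1) * w (2*(n-1-i)+1)
        = (catalan i : ℝ) * catalan (n-1-i) / 2 ^ (2*n) := by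
      intro i hi
      rw [mem_range] at hi
      rw [w_odd i, w_odd (n-1-i), div_mul_div_comm, ← pow_add,
        show 2*i+1 + (2*(n-1-i)+1) = 2*n from by omega]
    rw [Finset.sum_congr rfl hstep, ← Finset.sum_div, ← hcat, zero_add,
      show n+n+1 = 2*n+1 from by ring, w_odd n, pow_succ]
    ring
  · -- m odd
    subst hn
    rw [if_neg (by omega), w_even (2*n+1+1) (by omega), mul_zero, zero_add]
    rw [Finset.sum_eq_zero]
    intro j hj
    rcases Nat.even_or_odd j with ⟨i, hi⟩ | ⟨i, hi⟩
    · rw [w_even j (by omega), zero_mul]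
    · rw [w_even (2*n+1-j) (by rw [mem_range] at hj; omega), mul_zero]

def Wps : PowerSeries ℝ := PowerSeries.mk w

def q (k m : ℕ) : ℝ := PowerSeries.coeff m (Wps ^ k)

lemma q_zero (m : ℕ) : q 0 m = if m = 0 then 1 else 0 := by
  simp [q, PowerSeries.coeff_one]

lemma q_one (m : ℕ) : q 1 m = w m := by simp [q, Wps]

lemma q_succ (k m : ℕ) : q (k+1) m = ∑ j ∈ range (m+1), q k j * w (m - j) := by
  rw [q, pow_succ, PowerSeries.coeff_mul, Nat.sum_antidiagonal_eq_sum_range_succ_mk]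
  exact Finset.sum_congr rfl fun j _ => by simp [q, Wps]

lemma q_nonneg (k m : ℕ) : 0 ≤ q k m := by
  induction k generalizing m with
  | zero => rw [q_zero]; split <;> norm_num
  | succ k ih =>
    rw [q_succ]
    exact Finset.sum_nonneg fun j _ => mul_nonneg (ih j) (w_nonneg _)

lemma q_eq_zero_of_lt {k m : ℕ} (h : m < k) : q k m = 0 := by
  induction k generalizing m with
  | zero => omega
  | succ k ih =>
    rw [q_succ]
    apply Finset.sum_eq_zero
    intro j hj
    rw [mem_range] at hj
    rcases lt_or_ge j k with h' | h'
    · rw [ih h', zero_mul]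
    · rw [show m - j = 0 from by omega, w_zero, mul_zero]

lemma Wkey : (PowerSeries.X : PowerSeries ℝ) + PowerSeries.X * Wps^2 = (2:ℝ) • Wps := by
  ext n
  rw [map_add, PowerSeries.coeff_smul, smul_eq_mul]
  cases n with
  | zero =>
    simp [Wps, w_zero]
  | succ n =>
    rw [PowerSeries.coeff_succ_X_mul, sq, PowerSeries.coeff_mul,
      Nat.sum_antidiagonal_eq_sum_range_succ_mk, PowerSeries.coeff_X]
    have := w_conv n
    simp only [Wps, PowerSeries.coeff_mk] at *
    rw [show ((if n + 1 = 1 then (1:ℝ) else 0)) = (if n = 0 then (1:ℝ) else 0) from by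
      by_cases h : n = 0 <;> simp [h]]
    convert this using 2

lemma q_rec (k m : ℕ) : q (k+1) (m+1) = (q k m + q (k+2) m) / 2 := by
  have key : (2:ℝ) * q (k+1) (m+1) = q k m + q (k+2) m := by
    have h1 : (2:ℝ) • Wps^(k+1) = PowerSeries.X * Wps^k + PowerSeries.X * Wps^(k+2) := by
      calc (2:ℝ) • Wps^(k+1) = Wps^k * ((2:ℝ) • Wps) := by
            rw [pow_succ, mul_smul_comm]
          _ = PowerSeries.X * Wps^k + PowerSeries.X * Wps^(k+2) := by
            rw [← Wkey]; ring
    have := congrArg (PowerSeries.coeff (m+1)) h1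
    rw [PowerSeries.coeff_smul, smul_eq_mul, map_add, PowerSeries.coeff_succ_X_mul,
      PowerSeries.coeff_succ_X_mul] at this
    exact this
  linarith [key]

def T (m : ℕ) : ℝ := ∑ k ∈ range (m+1), (2*(k:ℝ)+1) * q (k+1) m


lemma T_zero : T 0 = 0 := by
  simp [T, q_one, w_zero]

lemma q_sum_ext (m M : ℕ) (h : m ≤ M) :
    ∑ k ∈ range M, (2*(k:ℝ)+1) * q (k+1) m = T m := by
  unfold T
  rcases eq_or_lt_of_le h with rfl | h'
  · apply Finset.sum_subset (Finset.range_subset_range.2 (by omega))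
    intro k hk hk'
    rw [mem_range] at hk hk'
    rw [q_eq_zero_of_lt (by omega), mul_zero]
  · symm
    apply Finset.sum_subset (Finset.range_subset_range.2 (by omega))
    intro k hk hk'
    rw [mem_range] at hk hk'
    rw [q_eq_zero_of_lt (by omega), mul_zero]

lemma T_succ (m : ℕ) : T (m+1) = T m + (q 0 m + q 1 m) / 2 := by
  have expand : T (m+1) = ∑ k ∈ range (m+2), (2*(k:ℝ)+1) * ((q k m + q (k+2) m)/2) := by
    unfold T
    exact Finset.sum_congr rfl fun k _ => by rw [q_rec]
  have split : T (m+1) = (∑ k ∈ range (m+2), (2*(k:ℝ)+1) * q k m) / 2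
      + (∑ k ∈ range (m+2), (2*(k:ℝ)+1) * q (k+2) m) / 2 := by
    rw [expand, Finset.sum_div, Finset.sum_div, ← Finset.sum_add_distrib]
    exact Finset.sum_congr rfl fun k _ => by ring
  have hA : ∑ k ∈ range (m+2), (2*(k:ℝ)+1) * q k m
      = T m + 2 * (∑ k ∈ range (m+1), q (k+1) m) + q 0 m := by
    rw [Finset.sum_range_succ' (fun k => (2*(k:ℝ)+1) * q k m) (m+1)]
    have e1 : ∑ k ∈ range (m+1), (2*((k:ℝ)+1)+1) * q (k+1) m
        = (∑ k ∈ range (m+1), (2*(k:ℝ)+1) * q (k+1) m)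
          + 2 * ∑ k ∈ range (m+1), q (k+1) m := by
      rw [Finset.mul_sum, ← Finset.sum_add_distrib]
      exact Finset.sum_congr rfl fun k _ => by ring
    push_cast
    push_cast at e1
    rw [e1, T]
    push_cast
    ring
  have hB : ∑ k ∈ range (m+2), (2*(k:ℝ)+1) * q (k+2) m
      = T m - 2 * (∑ k ∈ range (m+1), q (k+1) m) + q 1 m := by
    have h1 : ∑ j ∈ range (m+3), (2*(j:ℝ)-1) * q (j+1) m
        = (∑ k ∈ range (m+2), (2*(k:ℝ)+1) * q (k+2) m) + (2*(0:ℝ)-1) * q (0+1) m := by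
      rw [Finset.sum_range_succ' (fun j => (2*(j:ℝ)-1) * q (j+1) m) (m+2)]
      congr 1
      · exact Finset.sum_congr rfl fun k _ => by push_cast; ring_nf
      · norm_num
    have h2 : ∑ j ∈ range (m+3), (2*(j:ℝ)-1) * q (j+1) m
        = ∑ j ∈ range (m+1), (2*(j:ℝ)-1) * q (j+1) m := by
      symm
      apply Finset.sum_subset (Finset.range_subset_range.2 (by omega))
      intro k hk hk'
      rw [mem_range] at hk hk'
      rw [q_eq_zero_of_lt (by omega), mul_zero]
    have h3 : ∑ j ∈ range (m+1), (2*(j:ℝ)-1) * q (j+1) m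
        = T m - 2 * ∑ k ∈ range (m+1), q (k+1) m := by
      rw [T, Finset.mul_sum, ← Finset.sum_sub_distrib]
      exact Finset.sum_congr rfl fun k _ => by ring
    have := h1.symm.trans (h2.trans h3)
    simp only [zero_add] at this
    linarith [this]
  rw [split, hA, hB]; ring

def a (n : ℕ) : ℝ := (Nat.centralBinom n : ℝ) / 4 ^ n

lemma a_zero : a 0 = 1 := by simp [a, Nat.centralBinom]

lemma a_succ (n : ℕ) : a (n+1) = a n * (2*(n:ℝ)+1) / (2*(n:ℝ)+2) := by
  have h := Nat.succ_mul_centralBinom_succ n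
  have h' : ((n:ℝ)+1) * (Nat.centralBinom (n+1) : ℝ) = 2 * (2*(n:ℝ)+1) * Nat.centralBinom n := by
    exact_mod_cast congrArg (Nat.cast : ℕ → ℝ) h
  have hn : ((n:ℝ)+1) ≠ 0 := by positivity
  unfold a
  rw [pow_succ]
  field_simp
  linear_combination 2 * h' 

lemma a_sub (n : ℕ) : a n - a (n+1) = (catalan n : ℝ) / 2 ^ (2*n+1) := by
  have hc : ((n:ℝ)+1) * (catalan n : ℝ) = (Nat.centralBinom n : ℝ) := by
    exact_mod_cast congrArg (Nat.cast : ℕ → ℝ) (succ_mul_catalan_eq_centralBinom n)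
  have hn : ((n:ℝ)+1) ≠ 0 := by positivity
  rw [a_succ]
  unfold a
  have h4 : (4:ℝ)^n = 2^(2*n) := by rw [pow_mul]; norm_num
  rw [h4, pow_succ]
  field_simp
  linear_combination -1 * hc

-- partial sums of w
def CW (m : ℕ) : ℝ := ∑ j ∈ range m, w j

lemma T_val (m : ℕ) : T (m+1) = (1 + CW (m+1)) / 2 := by
  induction m with
  | zero =>
    rw [T_succ, T_zero, q_zero, q_one]
    simp [CW, w_zero]
  | succ m ih =>
    rw [T_succ, ih, q_zero, q_one, if_neg (by omega)]
    have : CW (m+2) = CW (m+1) + w (m+1) := Finset.sum_range_succ w (m+1)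
    rw [this]; ring

lemma CW_tail (m : ℕ) : 1 - CW (m+1) = a ((m+1)/2) := by
  induction m with
  | zero => simp [CW, w_zero, a_zero]
  | succ m ih =>
    have hs : CW (m+2) = CW (m+1) + w (m+1) := Finset.sum_range_succ w (m+1)
    rcases Nat.even_or_odd m with ⟨n, hn⟩ | ⟨n, hn⟩
    ·
      -- m = 2n: m+1 = 2n+1 odd, w (m+1) = catalan n / 2^(2n+1), (m+1)/2 = n, (m+2)/2 = n+1
      have h1 : (m+1)/2 = n := by omega
      have h2 : (m+2)/2 = n+1 := by omega
      have hw : w (m+1) = a n - a (n+1) := by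
        rw [show m+1 = 2*n+1 from by omega, w_odd n, a_sub]
      rw [h1] at ih
      rw [hs, h2, hw]
      linarith [ih]
    · -- m odd = 2n+1: m+1 even, w (m+1) = 0, (m+2)/2 = (m+1)/2 = n+1
      have h1 : (m+2)/2 = (m+1)/2 := by omega
      rw [hs, w_even (m+1) (by omega), h1]
      linarith [ih]

lemma a_nonneg (n : ℕ) : 0 ≤ a n := by unfold a; positivity


lemma a_le (n : ℕ) : a n ≤ 1 / Real.sqrt ((n:ℝ)+1) := by
  induction n with
  | zero => simp [a_zero]
  | succ n ih =>
    have hpos : (0:ℝ) < Real.sqrt ((n:ℝ)+1) := Real.sqrt_pos.2 (by positivity)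
    have hpos2 : (0:ℝ) < Real.sqrt ((n:ℝ)+2) := Real.sqrt_pos.2 (by positivity)
    have key : (2*(n:ℝ)+1) * Real.sqrt ((n:ℝ)+2) ≤ (2*(n:ℝ)+2) * Real.sqrt ((n:ℝ)+1) := by
      have h1 : (2*(n:ℝ)+1) * Real.sqrt ((n:ℝ)+2)
          = Real.sqrt ((2*(n:ℝ)+1)^2 * ((n:ℝ)+2)) := by
        rw [Real.sqrt_mul (by positivity), Real.sqrt_sq (by positivity)]
      have h2 : (2*(n:ℝ)+2) * Real.sqrt ((n:ℝ)+1)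
          = Real.sqrt ((2*(n:ℝ)+2)^2 * ((n:ℝ)+1)) := by
        rw [Real.sqrt_mul (by positivity), Real.sqrt_sq (by positivity)]
      rw [h1, h2]
      apply Real.sqrt_le_sqrt
      nlinarith [sq_nonneg ((n:ℝ))]
    rw [a_succ]
    have step1 : a n * (2*(n:ℝ)+1) / (2*(n:ℝ)+2)
        ≤ (1 / Real.sqrt ((n:ℝ)+1)) * (2*(n:ℝ)+1) / (2*(n:ℝ)+2) := by
      gcongr
    have step2 : (1 / Real.sqrt ((n:ℝ)+1)) * (2*(n:ℝ)+1) / (2*(n:ℝ)+2)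
        ≤ 1 / Real.sqrt ((n:ℝ)+2) := by
      rw [div_le_div_iff₀ (by positivity) hpos2]
      have expand : 1 / Real.sqrt ((n:ℝ)+1) * (2*(n:ℝ)+1) * Real.sqrt ((n:ℝ)+2)
          = ((2*(n:ℝ)+1) * Real.sqrt ((n:ℝ)+2)) / Real.sqrt ((n:ℝ)+1) := by ring
      rw [expand, div_le_iff₀ hpos]
      calc ((2*(n:ℝ)+1) * Real.sqrt ((n:ℝ)+2)) ≤ (2*(n:ℝ)+2) * Real.sqrt ((n:ℝ)+1) := key
        _ = 1 * (2*(n:ℝ)+2) * Real.sqrt ((n:ℝ)+1) := by ring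
    calc a n * (2*(n:ℝ)+1) / (2*(n:ℝ)+2) ≤ _ := step1
      _ ≤ 1 / Real.sqrt ((n:ℝ)+2) := step2
      _ = 1 / Real.sqrt (((n:ℕ)+1:ℕ)+1) := by push_cast; ring_nf
    
lemma sum_invsqrt_le (L : ℕ) : ∑ m ∈ range L, 1 / Real.sqrt ((m:ℝ)+1) ≤ 2 * Real.sqrt L := by
  induction L with
  | zero => simp
  | succ L ih =>
    rw [Finset.sum_range_succ]
    have hs : (0:ℝ) ≤ Real.sqrt L := Real.sqrt_nonneg _
    have ht : (0:ℝ) < Real.sqrt ((L:ℝ)+1) := Real.sqrt_pos.2 (by positivity)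
    have hsq : Real.sqrt (L:ℝ) ^ 2 = L := Real.sq_sqrt (by positivity)
    have htq : Real.sqrt ((L:ℝ)+1) ^ 2 = (L:ℝ)+1 := Real.sq_sqrt (by positivity)
    have key : 1 / Real.sqrt ((L:ℝ)+1) + 2 * Real.sqrt L ≤ 2 * Real.sqrt ((L:ℝ)+1) := by
      rw [div_add' _ _ _ (ne_of_gt ht), div_le_iff₀ ht]
      have hst : Real.sqrt (L:ℝ) * Real.sqrt ((L:ℝ)+1) ≤ (L:ℝ) + 1/2 := by
        nlinarith [sq_nonneg (Real.sqrt (L:ℝ) * Real.sqrt ((L:ℝ)+1) - ((L:ℝ)+1/2)),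
          mul_nonneg hs ht.le]
      nlinarith [hst]
    push_cast
    linarith [ih, key]


section Meas
variable {Ω : Type} [MeasurableSpace Ω] {μ : MeasureTheory.Measure Ω}
  {X : ℕ → Ω → ℕ}

lemma catMass_eq_w (n : ℕ) : catMass (1/2 - 0) n = w (2*n+1) := by
  rw [w_odd, catMass, pow_succ, pow_add, pow_mul]
  norm_num
  have h : ((1:ℝ)/2) ^ n * ((1/2) ^ n) = (1/4) ^ n := by
    rw [← mul_pow]; norm_num
  calc (catalan n : ℝ) * (1/2)^n * ((1/2)^n * (1/2))
      = (catalan n : ℝ) * ((1/2)^n * (1/2)^n) * (1/2) := by ring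
    _ = (catalan n : ℝ) * (1/4)^n * (1/2) := by rw [h]
    _ = (catalan n : ℝ) / (4^n * 2) := by rw [div_pow, one_pow]; ring

-- the law of the increments
lemma law_Y (hX : IIDCat μ 0 X) (i j : ℕ) : μ {ω | 2 * X i ω + 1 = j} = ENNReal.ofReal (w j) := by
  obtain ⟨hP, hM, hInd, hLaw⟩ := hX
  rcases Nat.even_or_odd j with ⟨n, hn⟩ | ⟨n, hn⟩
  · have : {ω | 2 * X i ω + 1 = j} = ∅ := by
      ext ω; simp only [Set.mem_setOf_eq, Set.mem_empty_iff_false, iff_false]; omega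
    rw [this, measure_empty, w_even j (by omega)]
    simp
  · have : {ω | 2 * X i ω + 1 = j} = {ω | X i ω = n} := by
      ext ω; simp only [Set.mem_setOf_eq]; omega
    rw [this, hLaw i n, show j = 2*n+1 from by omega, ← catMass_eq_w]

lemma meas_Y (hX : IIDCat μ 0 X) (i : ℕ) : Measurable (fun ω => 2 * X i ω + 1) :=
  (measurable_from_top (f := fun n : ℕ => 2*n+1)).comp (hX.2.1 i)

lemma law_S (hX : IIDCat μ 0 X) (k m : ℕ) :
    μ {ω | ∑ i ∈ range k, (2 * X i ω + 1) = m} = ENNReal.ofReal (q k m) := by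
  obtain ⟨hP, hM, hInd, hLaw⟩ := hX
  induction k generalizing m with
  | zero =>
    rcases Nat.eq_zero_or_pos m with rfl | hm
    · have : {ω : Ω | ∑ i ∈ range 0, (2 * X i ω + 1) = 0} = Set.univ := by
        ext ω; simp
      rw [this, measure_univ, q_zero]
      simp
    · have : {ω : Ω | ∑ i ∈ range 0, (2 * X i ω + 1) = m} = ∅ := by
        ext ω; simp; omega
      rw [this, measure_empty, q_zero, if_neg (by omega)]
      simp
  | succ k ih =>
    have hYmeas : ∀ i, Measurable (fun ω => 2 * X i ω + 1) := fun i =>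
      (measurable_from_top (f := fun n : ℕ => 2*n+1)).comp (hM i)
    have hSmeas : Measurable (fun ω => ∑ i ∈ range k, (2 * X i ω + 1)) :=
      Finset.measurable_sum (range k) (fun i _ => hYmeas i)
    have hY : iIndepFun (fun i ω => 2 * X i ω + 1) μ :=
      hInd.comp (fun _ n => 2*n+1) (fun _ => measurable_from_top)
    have hindep : IndepFun (fun ω => ∑ i ∈ range k, (2 * X i ω + 1))
        (fun ω => 2 * X k ω + 1) μ := by
      have h := hY.indepFun_finset_sum_of_notMem hYmeas (Finset.notMem_range_self (n := k))
      have heq : (∑ j ∈ range k, (fun i ω => 2 * X i ω + 1) j)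
          = fun ω => ∑ i ∈ range k, (2 * X i ω + 1) := by
        funext ω
        exact Finset.sum_apply ω (range k) _
      rwa [heq] at h
    have hdecomp : {ω | ∑ i ∈ range (k+1), (2 * X i ω + 1) = m}
        = ⋃ j ∈ range (m+1), ({ω | ∑ i ∈ range k, (2 * X i ω + 1) = j}
            ∩ {ω | 2 * X k ω + 1 = m - j}) := by
      ext ω
      simp only [Set.mem_setOf_eq, Set.mem_iUnion, Set.mem_inter_iff, Finset.mem_range,
        exists_prop, Finset.sum_range_succ]
      constructor
      · intro h
        exact ⟨∑ i ∈ range k, (2 * X i ω + 1), by omega, rfl, by omega⟩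
      · rintro ⟨j, hj, h1, h2⟩
        omega
    have hdisj : (↑(range (m+1)) : Set ℕ).PairwiseDisjoint
        (fun j => {ω | ∑ i ∈ range k, (2 * X i ω + 1) = j}
            ∩ {ω | 2 * X k ω + 1 = m - j}) := by
      intro j1 _ j2 _ hne
      apply Set.disjoint_left.2
      rintro ω ⟨h1, _⟩ ⟨h2, _⟩
      exact hne (h1.symm.trans h2)
    have hmeas : ∀ b ∈ range (m+1), MeasurableSet
        ({ω | ∑ i ∈ range k, (2 * X i ω + 1) = b} ∩ {ω | 2 * X k ω + 1 = m - b}) := by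
      intro b _
      exact (hSmeas (measurableSet_singleton b)).inter ((hYmeas k) (measurableSet_singleton (m-b)))
    rw [hdecomp, measure_biUnion_finset hdisj hmeas]
    have hterm : ∀ j ∈ range (m+1),
        μ ({ω | ∑ i ∈ range k, (2 * X i ω + 1) = j} ∩ {ω | 2 * X k ω + 1 = m - j})
        = ENNReal.ofReal (q k j * w (m - j)) := by
      intro j _
      have := hindep.measure_inter_preimage_eq_mul {j} {m - j}
        (measurableSet_singleton j) (measurableSet_singleton (m-j))
      have hsets : ((fun ω => ∑ i ∈ range k, (2 * X i ω + 1)) ⁻¹' {j})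
          = {ω | ∑ i ∈ range k, (2 * X i ω + 1) = j} := rfl
      have hsets2 : ((fun ω => 2 * X k ω + 1) ⁻¹' {m-j})
          = {ω | 2 * X k ω + 1 = m - j} := rfl
      rw [hsets, hsets2] at this
      rw [this, ih j, law_Y ⟨hP, hM, hInd, hLaw⟩ k (m - j),
        ← ENNReal.ofReal_mul (q_nonneg k j)]
    rw [Finset.sum_congr rfl hterm, ← ENNReal.ofReal_sum_of_nonneg
      (fun j _ => mul_nonneg (q_nonneg k j) (w_nonneg (m-j))), q_succ]


lemma law_S_le (hX : IIDCat μ 0 X) (k L : ℕ) :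
    μ {ω | ∑ i ∈ range k, (2 * X i ω + 1) ≤ L}
      = ENNReal.ofReal (∑ m ∈ range (L+1), q k m) := by
  obtain ⟨hP, hM, hInd, hLaw⟩ := hX
  have hYmeas : ∀ i, Measurable (fun ω => 2 * X i ω + 1) := fun i =>
    (measurable_from_top (f := fun n : ℕ => 2*n+1)).comp (hM i)
  have hSmeas : Measurable (fun ω => ∑ i ∈ range k, (2 * X i ω + 1)) :=
    Finset.measurable_sum (range k) (fun i _ => hYmeas i)
  have hdecomp : {ω | ∑ i ∈ range k, (2 * X i ω + 1) ≤ L}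
      = ⋃ m ∈ range (L+1), {ω | ∑ i ∈ range k, (2 * X i ω + 1) = m} := by
    ext ω
    simp only [Set.mem_setOf_eq, Set.mem_iUnion, Finset.mem_range, exists_prop]
    constructor
    · intro h; exact ⟨_, by omega, rfl⟩
    · rintro ⟨m, hm, h⟩; omega
  have hdisj : (↑(range (L+1)) : Set ℕ).PairwiseDisjoint
      (fun m => {ω | ∑ i ∈ range k, (2 * X i ω + 1) = m}) := by
    intro j1 _ j2 _ hne
    apply Set.disjoint_left.2
    rintro ω h1 h2
    exact hne ((h1 : _ = j1).symm.trans h2)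
  rw [hdecomp, measure_biUnion_finset hdisj
    (fun m _ => hSmeas (measurableSet_singleton m))]
  rw [Finset.sum_congr rfl (fun m _ => law_S ⟨hP, hM, hInd, hLaw⟩ k m),
    ← ENNReal.ofReal_sum_of_nonneg (fun m _ => q_nonneg k m)]

lemma sum_odds (n : ℕ) : ∑ k ∈ range n, (2*(k:ℝ)+1) = (n:ℝ)^2 := by
  induction n with
  | zero => simp
  | succ n ih => rw [Finset.sum_range_succ, ih]; push_cast; ring


lemma renCount_pointwise (L : ℕ) (ω : Ω) :
    ((renCount X L ω : ℝ))^2 = ∑ k ∈ range L, (2*(k:ℝ)+1) *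
      Set.indicator {ω' | ∑ i ∈ range (k+1), (2 * X i ω' + 1) ≤ L} (fun _ => (1:ℝ)) ω := by
  set P : ℕ → Prop := fun k => ∑ i ∈ range k, (2 * X i ω + 1) ≤ L with hP
  have hmono : ∀ k k', k ≤ k' → P k' → P k := by
    intro k k' hk h
    refine le_trans ?_ h
    exact Finset.sum_le_sum_of_subset (Finset.range_subset_range.2 hk)
  have hbound : ∀ k, P k → k ≤ L := by
    intro k h
    calc k = ∑ _i ∈ range k, 1 := by simp
      _ ≤ ∑ i ∈ range k, (2 * X i ω + 1) := Finset.sum_le_sum (fun i _ => by omega)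
      _ ≤ L := h
  classical
  set F : Finset ℕ := (Finset.Icc 1 L).filter (fun k => P k) with hF
  have hset : {k : ℕ | 1 ≤ k ∧ P k} = ↑F := by
    ext k
    simp only [Set.mem_setOf_eq, hF, Finset.coe_filter, Finset.mem_Icc]
    constructor
    · rintro ⟨h1, h2⟩; exact ⟨⟨h1, hbound k h2⟩, h2⟩
    · rintro ⟨⟨h1, _⟩, h2⟩; exact ⟨h1, h2⟩
  have hset' : {k : ℕ | 1 ≤ k ∧ ∑ i ∈ Finset.range k, (2 * X i ω + 1) ≤ L} = ↑F := hset
  have hren : renCount X L ω = F.card := by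
    rw [renCount, hset', Set.ncard_coe_finset]
  set N := F.card with hN
  have hNL : N ≤ L := by
    rw [hN, hF]
    calc ((Finset.Icc 1 L).filter (fun k => P k)).card ≤ (Finset.Icc 1 L).card :=
          Finset.card_filter_le _ _
      _ = L := by rw [Nat.card_Icc]; omega
  have key : ∀ k, 1 ≤ k → k ≤ L → (P k ↔ k ≤ N) := by
    intro k h1 h2
    constructor
    · intro h
      have hsub : Finset.Icc 1 k ⊆ F := by
        intro j hj
        rw [Finset.mem_Icc] at hj
        rw [hF, Finset.mem_filter, Finset.mem_Icc]
        exact ⟨⟨hj.1, le_trans hj.2 h2⟩, hmono j k hj.2 h⟩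
      calc k = (Finset.Icc 1 k).card := by rw [Nat.card_Icc]; omega
        _ ≤ N := Finset.card_le_card hsub
    · intro hkN
      by_contra hnk
      have hsub : F ⊆ Finset.Icc 1 (k-1) := by
        intro j hj
        rw [hF, Finset.mem_filter, Finset.mem_Icc] at hj
        rw [Finset.mem_Icc]
        refine ⟨hj.1.1, ?_⟩
        by_contra hjk
        exact hnk (hmono k j (by omega) hj.2)
      have := Finset.card_le_card hsub
      rw [Nat.card_Icc] at this
      omega
  have hind : ∀ k ∈ range L, (2*(k:ℝ)+1) *
      Set.indicator {ω' | ∑ i ∈ range (k+1), (2 * X i ω' + 1) ≤ L} (fun _ => (1:ℝ)) ω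
      = if k+1 ≤ N then (2*(k:ℝ)+1) else 0 := by
    intro k hk
    rw [Finset.mem_range] at hk
    rw [Set.indicator_apply]
    have hmem : (ω ∈ {ω' | ∑ i ∈ range (k+1), (2 * X i ω' + 1) ≤ L}) ↔ P (k+1) := Iff.rfl
    by_cases h : P (k+1)
    · rw [if_pos (hmem.2 h), if_pos (by rw [← key (k+1) (by omega) (by omega)]; exact h)]
      ring
    · rw [if_neg (fun hc => h (hmem.1 hc)),
        if_neg (by rw [← key (k+1) (by omega) (by omega)]; exact h), mul_zero]
  rw [Finset.sum_congr rfl hind, hren]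
  have h1 : ∑ x ∈ range L, (if x+1 ≤ N then (2*(x:ℝ)+1) else 0)
      = ∑ x ∈ range N, (if x+1 ≤ N then (2*(x:ℝ)+1) else 0) := by
    symm
    apply Finset.sum_subset (Finset.range_subset_range.2 hNL)
    intro x _ hx
    rw [Finset.mem_range] at hx
    rw [if_neg (by omega)]
  have h2 : ∑ x ∈ range N, (if x+1 ≤ N then (2*(x:ℝ)+1) else 0)
      = ∑ x ∈ range N, (2*(x:ℝ)+1) := by
    apply Finset.sum_congr rfl
    intro x hx
    rw [Finset.mem_range] at hx
    rw [if_pos (by omega)]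
  rw [h1, h2, sum_odds]


lemma integral_renCount_sq (hX : IIDCat μ 0 X) (L : ℕ) :
    ∫ ω, ((renCount X L ω : ℝ))^2 ∂μ
      = ∑ k ∈ range L, (2*(k:ℝ)+1) * (∑ m ∈ range (L+1), q (k+1) m) := by
  have hP := hX.1
  have hM := hX.2.1
  have hYmeas : ∀ i, Measurable (fun ω => 2 * X i ω + 1) := fun i =>
    (measurable_from_top (f := fun n : ℕ => 2*n+1)).comp (hM i)
  have hAmeas : ∀ k : ℕ, MeasurableSet {ω | ∑ i ∈ range (k+1), (2 * X i ω + 1) ≤ L} := by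
    intro k
    have hSmeas : Measurable (fun ω => ∑ i ∈ range (k+1), (2 * X i ω + 1)) :=
      Finset.measurable_sum (range (k+1)) (fun i _ => hYmeas i)
    exact hSmeas (measurableSet_Iic (a := L))
  have hfun : (fun ω => ((renCount X L ω : ℝ))^2)
      = fun ω => ∑ k ∈ range L, (2*(k:ℝ)+1) *
        Set.indicator {ω' | ∑ i ∈ range (k+1), (2 * X i ω' + 1) ≤ L} (fun _ => (1:ℝ)) ω :=
    funext (renCount_pointwise L)
  rw [hfun, integral_finset_sum]
  · apply Finset.sum_congr rfl
    intro k _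
    rw [MeasureTheory.integral_const_mul, integral_indicator_const (1:ℝ) (hAmeas k),
      measureReal_def, law_S_le hX (k+1) L, ENNReal.toReal_ofReal
        (Finset.sum_nonneg fun m _ => q_nonneg (k+1) m)]
    rw [smul_eq_mul, mul_one]
  · intro k _
    apply Integrable.const_mul
    exact (integrable_const (1:ℝ)).indicator (hAmeas k)

end Meas


-- master formula and final assembly

lemma T_closed (m : ℕ) : T (m+1) = 1 - a ((m+1)/2) / 2 := by
  have h1 := T_val m
  have h2 := CW_tail m
  rw [h1]; linarith

section Final
variable {Ω : Type} [MeasurableSpace Ω] {μ : MeasureTheory.Measure Ω} {X : ℕ → Ω → ℕ}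

lemma master (hX : IIDCat μ 0 X) (L : ℕ) :
    ∫ ω, ((renCount X L ω : ℝ))^2 ∂μ = (L:ℝ) - ∑ m ∈ range L, a ((m+1)/2) / 2 := by
  rw [integral_renCount_sq hX L]
  have h1 : ∑ k ∈ range L, (2*(k:ℝ)+1) * (∑ m ∈ range (L+1), q (k+1) m)
      = ∑ m ∈ range (L+1), ∑ k ∈ range L, (2*(k:ℝ)+1) * q (k+1) m := by
    rw [Finset.sum_comm]
    exact Finset.sum_congr rfl fun k _ => Finset.mul_sum _ _ _
  rw [h1]
  have h2 : ∑ m ∈ range (L+1), ∑ k ∈ range L, (2*(k:ℝ)+1) * q (k+1) m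
      = ∑ m ∈ range (L+1), T m := by
    apply Finset.sum_congr rfl
    intro m hm
    rw [Finset.mem_range] at hm
    exact q_sum_ext m L (by omega)
  rw [h2, Finset.sum_range_succ' T L, T_zero, add_zero]
  have h3 : ∑ m ∈ range L, T (m+1) = ∑ m ∈ range L, (1 - a ((m+1)/2) / 2) :=
    Finset.sum_congr rfl fun m _ => T_closed m
  rw [h3, Finset.sum_sub_distrib, Finset.sum_const, Finset.card_range, nsmul_eq_mul, mul_one]

lemma err_nonneg (L : ℕ) : 0 ≤ ∑ m ∈ range L, a ((m+1)/2) / 2 :=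
  Finset.sum_nonneg fun m _ => div_nonneg (a_nonneg _) (by norm_num)

lemma err_bound (L : ℕ) :
    ∑ m ∈ range L, a ((m+1)/2) / 2 ≤ Real.sqrt 2 * Real.sqrt L := by
  have hterm : ∀ m : ℕ, a ((m+1)/2) / 2 ≤ (Real.sqrt 2 / 2) * (1 / Real.sqrt ((m:ℝ)+1)) := by
    intro m
    set n := (m+1)/2 with hn
    have h1 : a n ≤ 1 / Real.sqrt ((n:ℝ)+1) := a_le n
    have h2 : 1 / Real.sqrt ((n:ℝ)+1) ≤ Real.sqrt 2 / Real.sqrt ((m:ℝ)+1) := by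
      have hm : (m:ℝ) + 1 ≤ 2 * ((n:ℝ) + 1) := by
        have : m + 1 ≤ 2 * (n + 1) := by omega
        exact_mod_cast this
      have hs1 : (0:ℝ) < Real.sqrt ((n:ℝ)+1) := Real.sqrt_pos.2 (by positivity)
      have hs2 : (0:ℝ) < Real.sqrt ((m:ℝ)+1) := Real.sqrt_pos.2 (by positivity)
      rw [div_le_div_iff₀ hs1 hs2, one_mul]
      calc Real.sqrt ((m:ℝ)+1) ≤ Real.sqrt (2 * ((n:ℝ)+1)) := Real.sqrt_le_sqrt hm
        _ = Real.sqrt 2 * Real.sqrt ((n:ℝ)+1) := Real.sqrt_mul (by norm_num) _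
    calc a n / 2 ≤ (Real.sqrt 2 / Real.sqrt ((m:ℝ)+1)) / 2 := by
          apply div_le_div_of_nonneg_right ?hx (by norm_num)
          exact le_trans h1 h2
      _ = (Real.sqrt 2 / 2) * (1 / Real.sqrt ((m:ℝ)+1)) := by ring
  calc ∑ m ∈ range L, a ((m+1)/2) / 2
      ≤ ∑ m ∈ range L, (Real.sqrt 2 / 2) * (1 / Real.sqrt ((m:ℝ)+1)) :=
        Finset.sum_le_sum fun m _ => hterm m
    _ = (Real.sqrt 2 / 2) * ∑ m ∈ range L, 1 / Real.sqrt ((m:ℝ)+1) := by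
        rw [Finset.mul_sum]
    _ ≤ (Real.sqrt 2 / 2) * (2 * Real.sqrt L) := by
        apply mul_le_mul_of_nonneg_left (sum_invsqrt_le L) (by positivity)
    _ = Real.sqrt 2 * Real.sqrt L := by ring

end Final

/-- **Second-moment asymptotics at criticality:** `lim_{L→∞} E(N̂⁰(L)²)/L = 1`, where
`N̂⁰(L)` is the number of renewal epochs in `{1,…,L}` of the renewal process with
i.i.d. inter-arrival times `2 X_i⁰ + 1`, `X_i⁰` critically Catalan-distributed. -/
theorem critical_renewal_second_moment_asymptotics
    (Ω : Type) [MeasurableSpace Ω] (μ : MeasureTheory.Measure Ω)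
    (X : ℕ → Ω → ℕ) (hX : IIDCat μ 0 X) :
    Tendsto (fun L : ℕ => (∫ ω, ((renCount X L ω : ℝ)) ^ 2 ∂μ) / (L : ℝ))
      atTop (nhds 1) := by
  have hmaster := master hX
  have hlow : Tendsto (fun L : ℕ => 1 - Real.sqrt 2 / Real.sqrt L) atTop (nhds 1) := by
    have h0 : Tendsto (fun L : ℕ => Real.sqrt 2 / Real.sqrt L) atTop (nhds 0) := by
      apply Tendsto.div_atTop (tendsto_const_nhds)
      have hs : Tendsto Real.sqrt atTop atTop := by
        apply tendsto_atTop_atTop.2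
        intro b
        refine ⟨b^2, fun x hx => ?_⟩
        calc b ≤ |b| := le_abs_self b
          _ = Real.sqrt (b^2) := (Real.sqrt_sq_eq_abs b).symm
          _ ≤ Real.sqrt x := Real.sqrt_le_sqrt hx
      exact hs.comp tendsto_natCast_atTop_atTop
    have := (tendsto_const_nhds (x := (1:ℝ)) (f := atTop (α := ℕ))).sub h0
    simpa using this
  apply tendsto_of_tendsto_of_tendsto_of_le_of_le' hlow tendsto_const_nhds
  · -- lower bound eventually
    filter_upwards [eventually_ge_atTop 1] with L hL
    have hLpos : (0:ℝ) < L := by exact_mod_cast hL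
    have hsL : (0:ℝ) < Real.sqrt L := Real.sqrt_pos.2 hLpos
    rw [hmaster L, le_div_iff₀ hLpos]
    have hmul : (1 - Real.sqrt 2 / Real.sqrt L) * L = (L:ℝ) - Real.sqrt 2 * Real.sqrt L := by
      rw [sub_mul, one_mul, div_mul_eq_mul_div, mul_div_assoc, Real.div_sqrt]
    rw [hmul]
    linarith [err_bound L]
  · -- upper bound eventually
    filter_upwards [eventually_ge_atTop 1] with L hL
    have hLpos : (0:ℝ) < L := by exact_mod_cast hL
    rw [hmaster L, div_le_one hLpos]
    linarith [err_nonneg L]
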